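/- Let R be a local ring and w₀, w₁ ∈ J(R), and let h(t) = t² - (1+w₁)t - w₀ with companion matrix C_h = [[0, w₀],[1, 1+w₁]]. Then C_h is strongly clean in M₂(R) if and only if h has a left root in J(R) and a left root in 1 + J(R). -/

import Mathlib

/-- An element of a ring is strongly clean if it is the sum of an idempotent and a unit
that commute with each other. -/
def IsStronglyClean {S : Type*} [Ring S] (a : S) : Prop :=
  ∃ e u : S, IsIdempotentElem e ∧ IsUnit u ∧ a = e + u ∧ e * u = u * e

/-!
If `C = E + U` is a strongly clean decomposition, then `E` commutes with `C`, and `E 1 0` must be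
a unit: otherwise `E` is congruent to `0` or `1` modulo `J`, and `U = C - E` has a row or a column
in `J`. The second rows of `E` and `1 - E`, normalised to `(1, λ)` and `(1, μ)`, are then left
eigenvectors of `C`, i.e. `λ` and `μ` are left roots, and `λ - μ = (E 1 0)⁻¹` is a unit. Since
`λ (λ - 1 - w₁) = w₀`, every left root lies in `J` or in `1 + J`, so one of `λ, μ` lies in each.
Conversely, left roots `l ∈ J` and `m ∈ 1 + J` make `P = [[1, l], [1, m]]` invertible with
`P C P⁻¹ = diag(l, m) = diag(1, 0) + diag(l - 1, m)`.
-/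

open Matrix

namespace IsStronglyClean

variable {S : Type*} [Ring S] {a : S}

theorem of_isUnit (h : IsUnit a) : IsStronglyClean a :=
  ⟨0, a, .zero, h, (zero_add a).symm, by simp⟩

theorem of_isUnit_sub_one (h : IsUnit (a - 1)) : IsStronglyClean a :=
  ⟨1, a - 1, .one, h, (add_sub_cancel 1 a).symm, by simp⟩

theorem map {T F : Type*} [Ring T] [FunLike F S T] [RingHomClass F S T] (f : F)
    (h : IsStronglyClean a) : IsStronglyClean (f a) := by
  obtain ⟨e, u, he, hu, rfl, hc⟩ := h
  exact ⟨f e, f u, he.map f, hu.map f, map_add f e u, by rw [← map_mul, hc, map_mul]⟩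

theorem units_conj (g : Sˣ) (h : IsStronglyClean a) : IsStronglyClean (g * a * ↑g⁻¹) :=
  h.map (MulSemiringAction.toRingHom (ConjAct Sˣ) S (ConjAct.toConjAct g))

theorem pi {ι : Type*} {S : ι → Type*} [∀ i, Ring (S i)] {a : ∀ i, S i}
    (h : ∀ i, IsStronglyClean (a i)) : IsStronglyClean a := by
  choose e u he hu hau hc using h
  exact ⟨e, u, funext he, Pi.isUnit_iff.2 hu, funext hau, funext hc⟩

theorem diagonal {n : Type*} [Fintype n] [DecidableEq n] {d : n → S}
    (h : ∀ i, IsStronglyClean (d i)) : IsStronglyClean (Matrix.diagonal d) :=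
  (pi h).map (diagonalRingHom n S)

end IsStronglyClean

namespace IsLocalRing

variable {R : Type*} [Ring R] [IsLocalRing R]

instance : IsDedekindFiniteMonoid R where
  mul_eq_one_symm {a b} hab := by
    have hidem : IsIdempotentElem (b * a) := by
      rw [IsIdempotentElem, mul_assoc, ← mul_assoc a, hab, one_mul]
    rcases isUnit_or_isUnit_of_add_one (add_sub_cancel (b * a) 1) with hu | hu
    · exact (IsIdempotentElem.iff_eq_one_of_isUnit hu).1 hidem
    · have ha : a * (1 - b * a) = 0 := by
        rw [mul_sub, ← mul_assoc, hab, one_mul, mul_one, sub_self]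
      rw [hu.mul_left_eq_zero.1 ha, zero_mul] at hab
      exact absurd hab zero_ne_one

theorem not_isUnit_sub {a b : R} (ha : ¬IsUnit a) (hb : ¬IsUnit b) : ¬IsUnit (a - b) := by
  rw [sub_eq_add_neg]
  exact nonunits_add ha (mem_nonunits_iff.2 (by rwa [IsUnit.neg_iff]))

theorem isUnit_sub_of_isUnit_left {a b : R} (ha : IsUnit a) (hb : ¬IsUnit b) :
    IsUnit (a - b) := by
  by_contra hab
  have hb' : ¬IsUnit (-b) := by rwa [IsUnit.neg_iff]
  exact not_isUnit_sub hab hb' (by rwa [sub_neg_eq_add, sub_add_cancel])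

theorem isUnit_sub_of_isUnit_right {a b : R} (ha : ¬IsUnit a) (hb : IsUnit b) :
    IsUnit (a - b) := by
  rw [← IsUnit.neg_iff, neg_sub]
  exact isUnit_sub_of_isUnit_left hb ha

theorem not_isUnit_of_nonunits_row {n : Type*} [Fintype n] [DecidableEq n] {M : Matrix n n R}
    (i : n) (h : ∀ k, ¬IsUnit (M i k)) : ¬IsUnit M := by
  rintro ⟨u, rfl⟩
  have hii := congr_fun (congr_fun u.mul_inv i) i
  rw [mul_apply, one_apply_eq] at hii
  obtain ⟨k, -, hk⟩ := exists_of_isUnit_sum (hii ▸ isUnit_one)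
  exact h k (isUnit_of_mul_isUnit_left hk)

theorem not_isUnit_of_nonunits_col {n : Type*} [Fintype n] [DecidableEq n] {M : Matrix n n R}
    (j : n) (h : ∀ k, ¬IsUnit (M k j)) : ¬IsUnit M := by
  rintro ⟨u, rfl⟩
  have hjj := congr_fun (congr_fun u.inv_mul j) j
  rw [mul_apply, one_apply_eq] at hjj
  obtain ⟨k, -, hk⟩ := exists_of_isUnit_sum (hjj ▸ isUnit_one)
  exact h k (isUnit_of_mul_isUnit_right hk)

end IsLocalRing

section Companion

variable {R : Type*} [Ring R] {b c : R}

theorem mul_companion_of_roots {l m : R} (hl : l ^ 2 - l * b - c = 0)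
    (hm : m ^ 2 - m * b - c = 0) :
    !![1, l; 1, m] * !![0, c; 1, b] = !![l, 0; 0, m] * !![1, l; 1, m] := by
  rw [sub_sub, sub_eq_zero, sq] at hl hm
  rw [mul_fin_two, mul_fin_two]
  simp [hl, hm, add_comm]

theorem isUnit_vandermonde_fin_two {l m : R} (h : IsUnit (m - l)) :
    IsUnit !![(1 : R), l; 1, m] := by
  set v : R := ↑h.unit⁻¹
  have hv : (m - l) * v = 1 := h.mul_val_inv
  have hv' : v * (m - l) = 1 := h.val_inv_mul
  refine ⟨⟨_, !![1 + l * v, -(l * v); -v, v], ?_, ?_⟩, rfl⟩ <;>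
    rw [mul_fin_two, one_fin_two] <;> congr 1 <;>
    simp only [one_mul, mul_one, mul_neg, neg_mul, add_neg_cancel_right, neg_add_cancel,
      vecCons_inj, and_true, true_and]
  · constructor <;> rw [← hv] <;> noncomm_ring
  · constructor
    · rw [show (1 + l * v) * l + -(l * v * m) = l - l * (v * (m - l)) by noncomm_ring, hv',
        mul_one, sub_self]
    · rw [← hv']; noncomm_ring

theorem isStronglyClean_companion_of_roots {l m : R} (hl : l ^ 2 - l * b - c = 0)
    (hm : m ^ 2 - m * b - c = 0) (hl1 : IsUnit (l - 1)) (hm0 : IsUnit m) (hlm : IsUnit (m - l)) :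
    IsStronglyClean !![0, c; 1, b] := by
  obtain ⟨P, hP⟩ := isUnit_vandermonde_fin_two hlm
  have hD : IsStronglyClean !![l, 0; 0, m] := by
    simpa [diagonal_fin_two] using IsStronglyClean.diagonal (d := ![l, m])
      (Fin.forall_fin_two.2 ⟨.of_isUnit_sub_one hl1, .of_isUnit hm0⟩)
  have hA : !![0, c; 1, b] = (↑P⁻¹ : Matrix (Fin 2) (Fin 2) R) * !![l, 0; 0, m] * P := by
    rw [mul_assoc, hP, ← mul_companion_of_roots hl hm, ← hP, ← mul_assoc, P.inv_mul, one_mul]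
  simpa [hA] using hD.units_conj P⁻¹

theorem entries_of_commute_companion {E : Matrix (Fin 2) (Fin 2) R}
    (h : Commute !![0, c; 1, b] E) : E 0 1 = c * E 1 0 ∧ E 1 1 = E 0 0 + b * E 1 0 := by
  have h00 := congr_fun (congr_fun h.eq 0) 0
  have h10 := congr_fun (congr_fun h.eq 1) 0
  simp only [mul_apply, Fin.sum_univ_two] at h00 h10
  simpa [eq_comm] using And.intro h00 h10

theorem root_of_isIdempotentElem_of_commute {E : Matrix (Fin 2) (Fin 2) R}
    (hE : IsIdempotentElem E) (hA : Commute !![0, c; 1, b] E) (u : Rˣ) (hu : E 1 0 = u) :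
    (↑u⁻¹ * E 1 1) ^ 2 - ↑u⁻¹ * E 1 1 * b - c = 0 := by
  obtain ⟨h01, h11⟩ := entries_of_commute_companion hA
  have hE10 := congr_fun (congr_fun hE.eq 1) 0
  have hE11 := congr_fun (congr_fun hE.eq 1) 1
  simp only [mul_apply, Fin.sum_univ_two, h01, hu] at hE10 hE11
  have hconj : ↑u⁻¹ * E 1 1 * u = 1 - E 0 0 :=
    calc ↑u⁻¹ * E 1 1 * u = ↑u⁻¹ * (u * E 0 0 + E 1 1 * u) - E 0 0 := by
          rw [mul_add, Units.inv_mul_cancel_left, mul_assoc, add_sub_cancel_left]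
      _ = 1 - E 0 0 := by rw [hE10, Units.inv_mul]
  have hbu : b * u = E 1 1 - E 0 0 := by rw [h11, hu, add_sub_cancel_left]
  have hcu : u * c * u = E 1 1 - E 1 1 * E 1 1 := by rw [eq_sub_iff_add_eq, mul_assoc, hE11]
  apply (Units.mul_right_eq_zero u).1
  apply (Units.mul_left_eq_zero u).1
  calc ↑u * ((↑u⁻¹ * E 1 1) ^ 2 - ↑u⁻¹ * E 1 1 * b - c) * ↑u
      = E 1 1 * (↑u⁻¹ * E 1 1 * u) - E 1 1 * (b * u) - u * c * u := by
        simp only [sq, mul_sub, sub_mul, mul_assoc, Units.mul_inv_cancel_left]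
    _ = 0 := by rw [hconj, hbu, hcu]; noncomm_ring

end Companion

section LocalRing

open IsLocalRing

variable {R : Type*} [Ring R] [IsLocalRing R] {w₀ w₁ : R}

theorem isUnit_apply_one_zero_of_commute_companion (hw₀ : ¬IsUnit w₀) (hw₁ : ¬IsUnit w₁)
    {E : Matrix (Fin 2) (Fin 2) R} (hE : IsIdempotentElem E)
    (hA : Commute !![0, w₀; 1, 1 + w₁] E) (hU : IsUnit (!![0, w₀; 1, 1 + w₁] - E)) :
    IsUnit (E 1 0) := by
  by_contra hz
  obtain ⟨h01, h11⟩ := entries_of_commute_companion hA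
  have hE00 := congr_fun (congr_fun hE.eq 0) 0
  simp only [mul_apply, Fin.sum_univ_two] at hE00
  have hy : ¬IsUnit (E 0 1) := h01 ▸ mt isUnit_of_mul_isUnit_right hz
  have hx : ¬IsUnit (E 0 0) ∨ ¬IsUnit (E 0 0 - 1) := by
    by_contra! hx
    have hxx : E 0 0 * (E 0 0 - 1) = -(E 0 1 * E 1 0) := by
      rw [mul_sub, mul_one, eq_neg_iff_add_eq_zero, sub_add_eq_add_sub, hE00, sub_self]
    exact hy (isUnit_of_mul_isUnit_left ((IsUnit.neg_iff _).1 (hxx ▸ hx.1.mul hx.2)))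
  have hw₀y : ¬IsUnit (w₀ - E 0 1) := not_isUnit_sub hw₀ hy
  rcases hx with hx | hx
  · refine not_isUnit_of_nonunits_row 0 (Fin.forall_fin_two.2 ⟨?_, ?_⟩) hU
    · simpa using hx
    · simpa using hw₀y
  · have h11' : 1 + w₁ - E 1 1 = w₁ - (E 0 0 - 1) - (1 + w₁) * E 1 0 := by rw [h11]; abel
    refine not_isUnit_of_nonunits_col 1 (Fin.forall_fin_two.2 ⟨?_, ?_⟩) hU
    · simpa using hw₀y
    · simpa [h11'] using
        not_isUnit_sub (not_isUnit_sub hw₁ hx) (mt isUnit_of_mul_isUnit_right hz)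

theorem not_isUnit_or_not_isUnit_sub_one_of_root (hw₀ : ¬IsUnit w₀) (hw₁ : ¬IsUnit w₁) {lam : R}
    (h : lam ^ 2 - lam * (1 + w₁) - w₀ = 0) : ¬IsUnit lam ∨ ¬IsUnit (lam - 1) := by
  by_contra! hl
  have hfac : lam * (lam - 1 - w₁) = w₀ := by
    rw [← sub_eq_zero, ← h]; noncomm_ring
  exact hw₀ (hfac ▸ hl.1.mul (isUnit_sub_of_isUnit_left hl.2 hw₁))

theorem exists_roots_of_isUnit_sub (hw₀ : ¬IsUnit w₀) (hw₁ : ¬IsUnit w₁) {lam mu : R}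
    (hlam : lam ^ 2 - lam * (1 + w₁) - w₀ = 0) (hmu : mu ^ 2 - mu * (1 + w₁) - w₀ = 0)
    (h : IsUnit (lam - mu)) :
    (∃ lam : R, ¬ IsUnit lam ∧ lam ^ 2 - lam * (1 + w₁) - w₀ = 0) ∧
      (∃ lam : R, ¬ IsUnit (lam - 1) ∧ lam ^ 2 - lam * (1 + w₁) - w₀ = 0) := by
  have hmu' := not_isUnit_or_not_isUnit_sub_one_of_root hw₀ hw₁ hmu
  rcases not_isUnit_or_not_isUnit_sub_one_of_root hw₀ hw₁ hlam with hl | hl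
  · have hm : IsUnit mu := by simpa using isUnit_sub_of_isUnit_right hl h
    exact ⟨⟨lam, hl, hlam⟩, mu, hmu'.resolve_left (not_not.2 hm), hmu⟩
  · have hm : IsUnit (mu - 1) := by
      simpa using isUnit_sub_of_isUnit_right hl h
    exact ⟨⟨mu, hmu'.resolve_right (not_not.2 hm), hmu⟩, lam, hl, hlam⟩

end LocalRing

/-- Let `R` be a local ring (where `J(R)` is the set of nonunits), `w₀, w₁ ∈ J(R)` and
`h(t) = t² - (1+w₁)t - w₀` with companion matrix `C_h = [[0, w₀],[1, 1+w₁]]`. Then `C_h`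
is strongly clean in `M₂(R)` iff `h` has a left root in `J(R)` and one in `1 + J(R)`. -/
theorem companion_stronglyClean_iff {R : Type*} [Ring R] [IsLocalRing R]
    (w₀ w₁ : R) (hw₀ : ¬ IsUnit w₀) (hw₁ : ¬ IsUnit w₁) :
    IsStronglyClean !![0, w₀; 1, 1 + w₁] ↔
      (∃ lam : R, ¬ IsUnit lam ∧ lam ^ 2 - lam * (1 + w₁) - w₀ = 0) ∧
      (∃ lam : R, ¬ IsUnit (lam - 1) ∧ lam ^ 2 - lam * (1 + w₁) - w₀ = 0) := by
  constructor
  · rintro ⟨E, U, hE, hU, hAEU, hEU⟩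
    have hA : Commute !![0, w₀; 1, 1 + w₁] E := hAEU ▸ (Commute.refl E).add_left hEU.symm
    obtain ⟨z, hz⟩ := isUnit_apply_one_zero_of_commute_companion hw₀ hw₁ hE hA
      (by rwa [hAEU, add_sub_cancel_left])
    have hlam := root_of_isIdempotentElem_of_commute hE hA z hz.symm
    have hmu := root_of_isIdempotentElem_of_commute hE.one_sub
      ((Commute.one_right _).sub_right hA) (-z) (by simp [← hz])
    refine exists_roots_of_isUnit_sub hw₀ hw₁ hlam hmu ?_
    convert z⁻¹.isUnit using 1
    simp only [inv_neg, Units.val_neg, Matrix.sub_apply, Matrix.one_apply_eq, neg_mul,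
      sub_neg_eq_add]
    rw [← mul_add, add_sub_cancel, mul_one]
  · rintro ⟨⟨l, hl, hlr⟩, m, hm, hmr⟩
    have hm0 : IsUnit m := by
      simpa using IsLocalRing.isUnit_sub_of_isUnit_right hm isUnit_one.neg
    exact isStronglyClean_companion_of_roots hlr hmr
      (IsLocalRing.isUnit_sub_of_isUnit_right hl isUnit_one) hm0
      (IsLocalRing.isUnit_sub_of_isUnit_left hm0 hl)
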